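/- Truth Lemma for C_nᴰ: let n ≥ 2 and let Δ ∈ W_can^{(n)} (i.e., Δ is ψ-saturated in C_nᴰ for some ψ). Then for all formulas α, β over Σ₁ᴰ: (1) α ∧ β ∈ Δ iff α, β ∈ Δ; (2) α ∨ β ∈ Δ iff α ∈ Δ or β ∈ Δ; (3) α → β ∈ Δ iff α ∉ Δ or β ∈ Δ; (4) if α ∉ Δ then ¬α ∈ Δ; (5) if ¬¬α ∈ Δ then α ∈ Δ; (6) if α ∉ Δ or ¬α ∉ Δ, then α¹ ∈ Δ and ¬(α¹) ∉ Δ; (7) if α, ¬α ∈ Δ then for every 1 ≤ i ≤ n: if α^i ∉ Δ then α^j ∈ Δ for every 1 ≤ j ≤ n with j ≠ i; (8) if α, ¬α ∈ Δ then there exists a unique 1 ≤ k ≤ n with α^k ∉ Δ; (9) α^{(n)} ∈ Δ iff α ∉ Δ or ¬α ∉ Δ; (10) Oα ∈ Δ iff α ∈ Δ' for every Δ' ∈ W_can^{(n)} with Δ R_can^{(n)} Δ'; (11) if α^{(n)} ∈ Δ then (Oα)^{(n)} ∈ Δ. -/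

import Mathlib

/-- Formulas over the signature Σ₁ᴰ = {∧, ∨, →, ¬, O}, with countably many
propositional variables. -/
inductive Form : Type
  | var : ℕ → Form
  | and : Form → Form → Form
  | or : Form → Form → Form
  | imp : Form → Form → Form
  | neg : Form → Form
  | obl : Form → Form

namespace Form

/-- α⁰ = α, α^{k+1} = ¬(α^k ∧ ¬α^k). -/
def pow (α : Form) : ℕ → Form
  | 0 => α
  | k + 1 => ((α.pow k).and (α.pow k).neg).neg

/-- α^{(n)} = α¹ ∧ … ∧ αⁿ (for n ≥ 1). -/
def bigPow (α : Form) : ℕ → Form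
  | 0 => α.pow 1
  | 1 => α.pow 1
  | m + 2 => (α.bigPow (m + 1)).and (α.pow (m + 2))

/-- ∼^{(n)}α := ¬α ∧ α^{(n)}. -/
def snn (n : ℕ) (α : Form) : Form := α.neg.and (α.bigPow n)

end Form

/-- The n+2 snapshots of the swap structure for C_nᴰ: T_n, t^n_0, …, t^n_{n-1}, F_n. -/
inductive SVn (n : ℕ) : Type
  | T : SVn n
  | t : Fin n → SVn n
  | F : SVn n
deriving DecidableEq

namespace SVn

/-- The coordinates of a snapshot, as an element of 2^{n+1} (0-indexed):
T_n = (1,0,1,…,1), t^n_i has its unique 0 at (0-indexed) position i+2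
(so t^n_{n-1} = (1,…,1)), and F_n = (0,1,…,1). -/
def coord {n : ℕ} : SVn n → Fin (n + 1) → Bool
  | .T, j => decide (j.val ≠ 1)
  | .t i, j => decide (j.val ≠ i.val + 2)
  | .F, j => decide (j.val ≠ 0)

/-- First coordinate z₁. -/
def p1 {n : ℕ} (z : SVn n) : Bool := z.coord 0

/-- Second coordinate z₂. -/
def p2 {n : ℕ} (z : SVn n) : Bool := z.coord 1

/-- Designated values D_n = A_n ∖ {F_n}, i.e. first coordinate 1. -/
def desig {n : ℕ} (z : SVn n) : Prop := z.p1 = true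

/-- Boolean values Boo_n = {T_n, F_n}. -/
def boo {n : ℕ} (z : SVn n) : Prop := z = SVn.T ∨ z = SVn.F

/-- Inconsistent values I_n = A_n ∖ Boo_n. -/
def incons {n : ℕ} (z : SVn n) : Prop := ∃ i : Fin n, z = SVn.t i

end SVn

/-- Boolean implication a ⊃ b. -/
def boolImp (a b : Bool) : Bool := !a || b

/-- Membership of c in a #̃ b for a binary connective # with Boolean counterpart
`op`: c₁ = a₁ op b₁, and moreover c ∈ Boo_n whenever a, b ∈ Boo_n. -/
def opCond {n : ℕ} (op : Bool → Bool → Bool) (c a b : SVn n) : Prop :=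
  c.p1 = op a.p1 b.p1 ∧ (a.boo → b.boo → c.boo)

/-- Swap Kripke pre-model conditions for C_nᴰ on a serial frame (W,R) with
valuations v_w : Form → A_n. -/
structure IsPreModelCnD (n : ℕ) {W : Type} (R : W → W → Prop)
    (v : W → Form → SVn n) : Prop where
  serial : ∀ w, ∃ w', R w w'
  and_ : ∀ w α β, opCond (· && ·) (v w (α.and β)) (v w α) (v w β)
  or_ : ∀ w α β, opCond (· || ·) (v w (α.or β)) (v w α) (v w β)
  imp_ : ∀ w α β, opCond boolImp (v w (α.imp β)) (v w α) (v w β)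
  neg_ : ∀ w α, (v w α.neg).p1 = (v w α).p2 ∧ (v w α.neg).p2 ≤ (v w α).p1
  obl_ : ∀ w α, ((v w α.obl).p1 = true ↔ ∀ w', R w w' → (v w' α).p1 = true)

/-- The RNmatrix restrictions on valuations:
(i) v_w(α) = t^n_0 implies v_w(α ∧ ¬α) = T_n;
(ii) for 1 ≤ k ≤ n−1, v_w(α) = t^n_k implies v_w(α ∧ ¬α) ∈ I_n and
v_w(α¹) = t^n_{k−1}. -/
def RestrCnD (n : ℕ) {W : Type} (v : W → Form → SVn n) : Prop :=
  (∀ (w : W) (α : Form) (h0 : 0 < n),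
      v w α = SVn.t ⟨0, h0⟩ → v w (α.and α.neg) = SVn.T) ∧
  (∀ (w : W) (α : Form) (k : ℕ) (hk : k < n), 1 ≤ k → v w α = SVn.t ⟨k, hk⟩ →
      (v w (α.and α.neg)).incons ∧ v w (α.pow 1) = SVn.t ⟨k - 1, by omega⟩)

/-- A swap Kripke model for C_nᴰ: a pre-model satisfying the restrictions (i), (ii)
and (iii): v_w(α) ∈ Boo_n implies v_w(Oα) ∈ Boo_n. -/
structure IsModelCnD (n : ℕ) {W : Type} (R : W → W → Prop)
    (v : W → Form → SVn n) : Prop where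
  pre : IsPreModelCnD n R v
  restr : RestrCnD n v
  booObl : ∀ w α, (v w α).boo → (v w α.obl).boo

/-- Theorems of the Hilbert calculus C_nᴰ: CPL⁺ axioms, (EM), (cf), (bc_n), (P_n),
(O-K), (D_n), (PO_n), with rules Modus Ponens and O-necessitation. -/
inductive ThmCnD (n : ℕ) : Form → Prop
  | A1 (α β : Form) : ThmCnD n (α.imp (β.imp α))
  | A2 (α β γ : Form) : ThmCnD n ((α.imp (β.imp γ)).imp ((α.imp β).imp (α.imp γ)))
  | A3 (α β : Form) : ThmCnD n (α.imp (β.imp (α.and β)))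
  | A4 (α β : Form) : ThmCnD n ((α.and β).imp α)
  | A5 (α β : Form) : ThmCnD n ((α.and β).imp β)
  | A6 (α β : Form) : ThmCnD n (α.imp (α.or β))
  | A7 (α β : Form) : ThmCnD n (β.imp (α.or β))
  | A8 (α β γ : Form) : ThmCnD n ((α.imp γ).imp ((β.imp γ).imp ((α.or β).imp γ)))
  | A9 (α β : Form) : ThmCnD n (((α.imp β).imp α).imp α)
  | EM (α : Form) : ThmCnD n (α.or α.neg)
  | cf (α : Form) : ThmCnD n (α.neg.neg.imp α)
  | bcn (α β : Form) : ThmCnD n ((α.bigPow n).imp (α.imp (α.neg.imp β)))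
  | Pn (α β : Form) : ThmCnD n (((α.bigPow n).and (β.bigPow n)).imp
      (((α.imp β).bigPow n).and (((α.or β).bigPow n).and ((α.and β).bigPow n))))
  | OK (α β : Form) : ThmCnD n ((α.imp β).obl.imp (α.obl.imp β.obl))
  | Dn (α : Form) : ThmCnD n (α.obl.imp (Form.snn n ((Form.snn n α).obl)))
  | POn (α : Form) : ThmCnD n ((α.bigPow n).imp (α.obl.bigPow n))
  | mp {α β : Form} : ThmCnD n (α.imp β) → ThmCnD n α → ThmCnD n β
  | nec {α : Form} : ThmCnD n α → ThmCnD n α.obl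

/-- conj γ [γ₂,…,γ_k] = γ ∧ γ₂ ∧ … ∧ γ_k -/
def conj (γ : Form) : List Form → Form
  | [] => γ
  | δ :: l => γ.and (conj δ l)

/-- Γ ⊢_{C_nᴰ} φ iff ⊢ φ or ⊢ (γ₁ ∧ … ∧ γ_k) → φ for some γ₁,…,γ_k ∈ Γ, k ≥ 1. -/
def DerivCnD (n : ℕ) (Γ : Set Form) (φ : Form) : Prop :=
  ThmCnD n φ ∨ ∃ (γ : Form) (l : List Form),
    (∀ δ ∈ γ :: l, δ ∈ Γ) ∧ ThmCnD n ((conj γ l).imp φ)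

/-- Δ is ψ-saturated in C_nᴰ: Δ ⊬ ψ and Δ ∪ {φ} ⊢ ψ for every φ ∉ Δ. -/
def SaturatedCnD (n : ℕ) (Δ : Set Form) (ψ : Form) : Prop :=
  ¬ DerivCnD n Δ ψ ∧ ∀ φ : Form, φ ∉ Δ → DerivCnD n (insert φ Δ) ψ

/-- The canonical worlds for C_nᴰ. -/
def WcanCnD (n : ℕ) : Set (Set Form) := {Δ | ∃ ψ, SaturatedCnD n Δ ψ}

/-- The canonical accessibility relation for C_nᴰ. -/
def RcanCnD (Δ Θ : Set Form) : Prop := ∀ φ : Form, φ.obl ∈ Δ → φ ∈ Θ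

/-!
Saturated sets are closed under derivability and prime: if `α ∨ β ∈ Δ` but `α, β ∉ Δ`, then `Δ`
derives `α → ψ` and `β → ψ`, hence `ψ`. Primeness applied to the theorems `α ∨ ¬α` and
`(α → β) ∨ α` gives the classical clauses. Applied to `α¹ = ¬(α ∧ ¬α)` it shows that as soon as
`αᵏ` and `¬αᵏ` are not both in `Δ`, the same holds for every higher power, which moreover lies in
`Δ`; so at most one power of `α` is missing from `Δ`, and (bc_n) forces one of `α¹, …, αⁿ` to be
missing when `α, ¬α ∈ Δ`. For `O`: if `Oα ∉ Δ`, necessitation and (O-K) show that `α` is not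
derivable from `{φ | Oφ ∈ Δ}`, and since non-derivability has finite character, the
Teichmüller–Tukey lemma extends this set to an `α`-saturated world accessible from `Δ`.
-/

namespace ThmCnD

variable {n : ℕ} {A B C D : Form}

theorem imp_mp (h₁ : ThmCnD n (A.imp (B.imp C))) (h₂ : ThmCnD n (A.imp B)) :
    ThmCnD n (A.imp C) :=
  mp (mp (A2 A B C) h₁) h₂

theorem imp_intro (h : ThmCnD n B) : ThmCnD n (A.imp B) := mp (A1 B A) h

theorem imp_self (A : Form) : ThmCnD n (A.imp A) := imp_mp (A1 A (A.imp A)) (A1 A A)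

theorem imp_trans (h₁ : ThmCnD n (A.imp B)) (h₂ : ThmCnD n (B.imp C)) : ThmCnD n (A.imp C) :=
  imp_mp (imp_intro h₂) h₁

theorem imp_and (h₁ : ThmCnD n (A.imp B)) (h₂ : ThmCnD n (A.imp C)) :
    ThmCnD n (A.imp (B.and C)) :=
  imp_mp (imp_trans h₁ (A3 B C)) h₂

theorem curry (h : ThmCnD n ((A.and B).imp C)) : ThmCnD n (A.imp (B.imp C)) :=
  imp_trans (A3 A B) (mp (A2 B (A.and B) C) (imp_intro h))

theorem imp_precomp (h : ThmCnD n (A.imp B)) : ThmCnD n ((B.imp C).imp (A.imp C)) :=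
  imp_mp (imp_mp (imp_intro (A2 A B C)) (A1 (B.imp C) A)) (imp_intro h)

/-- Peirce's law (A9) with the conclusion `X := (α → β) ∨ α`: `(X → β) → X` holds since
`X → β` entails `α → β`. -/
theorem imp_or_self (α β : Form) : ThmCnD n ((α.imp β).or α) :=
  mp (A9 _ β) (imp_trans (imp_precomp (A7 (α.imp β) α)) (A6 (α.imp β) α))

theorem conj_imp_of_mem {δ γ : Form} {l : List Form} (h : δ ∈ γ :: l) :
    ThmCnD n ((conj γ l).imp δ) := by
  induction l generalizing γ with
  | nil => obtain rfl := List.mem_singleton.1 h; exact imp_self δ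
  | cons x l ih =>
    rcases List.mem_cons.1 h with rfl | h
    · exact A4 δ (conj x l)
    · exact imp_trans (A5 γ (conj x l)) (ih h)

theorem imp_conj {γ : Form} {l : List Form} (h : ∀ δ ∈ γ :: l, ThmCnD n (D.imp δ)) :
    ThmCnD n (D.imp (conj γ l)) := by
  induction l generalizing γ with
  | nil => exact h γ List.mem_cons_self
  | cons x l ih =>
    exact imp_and (h γ List.mem_cons_self) (ih fun δ hδ => h δ (List.mem_cons_of_mem γ hδ))

end ThmCnD

open ThmCnD

/-- Entailment of `φ` from the list `l` in an arbitrary context formula `D`. Taking `D = conj γ l'`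
for `l = γ :: l'` shows that it amounts to `⊢ conj γ l' → φ`, but in this form weakening,
modus ponens and the deduction theorem need no bookkeeping of conjunctions. -/
def EntailsCnD (n : ℕ) (l : List Form) (φ : Form) : Prop :=
  ∀ D : Form, (∀ δ ∈ l, ThmCnD n (D.imp δ)) → ThmCnD n (D.imp φ)

namespace EntailsCnD

variable {n : ℕ} {l l' : List Form} {φ χ : Form}

theorem of_mem (h : φ ∈ l) : EntailsCnD n l φ := fun _ hD => hD φ h

theorem of_thmCnD (h : ThmCnD n φ) : EntailsCnD n l φ := fun _ _ => imp_intro h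

theorem thmCnD_of_nil (h : EntailsCnD n [] φ) : ThmCnD n φ :=
  mp (h (φ.imp φ) fun _ hδ => absurd hδ List.not_mem_nil) (imp_self φ)

theorem mono (h : EntailsCnD n l φ) (hl : l ⊆ l') : EntailsCnD n l' φ :=
  fun D hD => h D fun δ hδ => hD δ (hl hδ)

theorem mp (h₁ : EntailsCnD n l (φ.imp χ)) (h₂ : EntailsCnD n l φ) : EntailsCnD n l χ :=
  fun D hD => imp_mp (h₁ D hD) (h₂ D hD)

theorem imp_intro (h : EntailsCnD n (φ :: l) χ) : EntailsCnD n l (φ.imp χ) := by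
  refine fun D hD => curry (h (D.and φ) fun δ hδ => ?_)
  rcases List.mem_cons.1 hδ with rfl | hδ
  · exact A5 D δ
  · exact imp_trans (A4 D φ) (hD δ hδ)

end EntailsCnD

namespace DerivCnD

variable {n : ℕ} {Γ : Set Form} {φ χ : Form}

theorem iff_exists_entailsCnD :
    DerivCnD n Γ φ ↔ ∃ l : List Form, (∀ δ ∈ l, δ ∈ Γ) ∧ EntailsCnD n l φ := by
  constructor
  · rintro (h | ⟨γ, l, hl, h⟩)
    · exact ⟨[], fun _ hδ => absurd hδ List.not_mem_nil, .of_thmCnD h⟩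
    · exact ⟨γ :: l, hl, fun D hD => imp_trans (imp_conj hD) h⟩
  · rintro ⟨_ | ⟨γ, l⟩, hl, h⟩
    · exact Or.inl h.thmCnD_of_nil
    · exact Or.inr ⟨γ, l, hl, h _ fun _ hδ => conj_imp_of_mem hδ⟩

theorem of_mem (h : φ ∈ Γ) : DerivCnD n Γ φ :=
  iff_exists_entailsCnD.2 ⟨[φ], by simpa using h, .of_mem List.mem_cons_self⟩

theorem of_thmCnD (h : ThmCnD n φ) : DerivCnD n Γ φ := Or.inl h

theorem mp (h₁ : DerivCnD n Γ (φ.imp χ)) (h₂ : DerivCnD n Γ φ) : DerivCnD n Γ χ := by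
  obtain ⟨l₁, hl₁, he₁⟩ := iff_exists_entailsCnD.1 h₁
  obtain ⟨l₂, hl₂, he₂⟩ := iff_exists_entailsCnD.1 h₂
  exact iff_exists_entailsCnD.2 ⟨l₁ ++ l₂, List.forall_mem_append.2 ⟨hl₁, hl₂⟩,
    (he₁.mono (List.subset_append_left _ _)).mp (he₂.mono (List.subset_append_right _ _))⟩

theorem imp_of_insert (h : DerivCnD n (insert φ Γ) χ) : DerivCnD n Γ (φ.imp χ) := by
  classical
  obtain ⟨l, hl, he⟩ := iff_exists_entailsCnD.1 h
  refine iff_exists_entailsCnD.2 ⟨l.filter (· ∈ Γ), fun δ hδ => by simpa using (List.mem_filter.1 hδ).2, ?_⟩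
  refine (he.mono fun δ hδ => ?_).imp_intro
  rcases hl δ hδ with rfl | hΓ
  · exact List.mem_cons_self
  · exact List.mem_cons_of_mem _ (List.mem_filter.2 ⟨hδ, by simpa using hΓ⟩)

theorem obl_of_entailsCnD {l : List Form} (h : EntailsCnD n l φ)
    (hl : ∀ δ ∈ l, δ.obl ∈ Γ) : DerivCnD n Γ φ.obl := by
  induction l generalizing φ with
  | nil => exact of_thmCnD (nec h.thmCnD_of_nil)
  | cons δ l ih =>
    have himp : DerivCnD n Γ (δ.imp φ).obl :=
      ih h.imp_intro fun δ' hδ' => hl δ' (List.mem_cons_of_mem δ hδ')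
    exact ((of_thmCnD (OK δ φ)).mp himp).mp (of_mem (hl δ List.mem_cons_self))

theorem obl_of_preimage (h : DerivCnD n (Form.obl ⁻¹' Γ) φ) : DerivCnD n Γ φ.obl :=
  let ⟨_, hl, he⟩ := iff_exists_entailsCnD.1 h
  obl_of_entailsCnD he hl

theorem isOfFiniteCharacter_setOf_not (n : ℕ) (φ : Form) :
    Order.IsOfFiniteCharacter {Γ : Set Form | ¬ DerivCnD n Γ φ} := by
  refine fun Γ => ⟨fun hΓ Γ₀ hΓ₀ _ h => hΓ ?_, fun h hΓ => ?_⟩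
  · obtain ⟨l, hl, he⟩ := iff_exists_entailsCnD.1 h
    exact iff_exists_entailsCnD.2 ⟨l, fun δ hδ => hΓ₀ (hl δ hδ), he⟩
  · obtain ⟨l, hl, he⟩ := iff_exists_entailsCnD.1 hΓ
    exact h {δ | δ ∈ l} hl l.finite_toSet (iff_exists_entailsCnD.2 ⟨l, fun _ => id, he⟩)

theorem exists_saturatedCnD_superset (h : ¬ DerivCnD n Γ φ) :
    ∃ Θ, Γ ⊆ Θ ∧ SaturatedCnD n Θ φ := by
  obtain ⟨Θ, hΓΘ, hmax⟩ := (isOfFiniteCharacter_setOf_not n φ).exists_maximal h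
  refine ⟨Θ, hΓΘ, hmax.1, fun χ hχ => by_contra fun hins => hχ ?_⟩
  exact hmax.2 hins (Set.subset_insert χ Θ) (Set.mem_insert χ Θ)

end DerivCnD

namespace SaturatedCnD

variable {n : ℕ} {Δ : Set Form} {ψ α β φ χ : Form}

theorem mem_of_derivCnD (hs : SaturatedCnD n Δ ψ) (h : DerivCnD n Δ φ) : φ ∈ Δ :=
  by_contra fun hφ => hs.1 ((hs.2 φ hφ).imp_of_insert.mp h)

theorem psi_notMem (hs : SaturatedCnD n Δ ψ) : ψ ∉ Δ := fun h => hs.1 (.of_mem h)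

theorem imp_psi_mem (hs : SaturatedCnD n Δ ψ) (h : φ ∉ Δ) : φ.imp ψ ∈ Δ :=
  hs.mem_of_derivCnD (hs.2 φ h).imp_of_insert

theorem mem_of_imp_mem (hs : SaturatedCnD n Δ ψ) (h₁ : φ.imp χ ∈ Δ) (h₂ : φ ∈ Δ) : χ ∈ Δ :=
  hs.mem_of_derivCnD ((DerivCnD.of_mem h₁).mp (.of_mem h₂))

theorem mem_of_thmCnD (hs : SaturatedCnD n Δ ψ) (h : ThmCnD n φ) : φ ∈ Δ :=
  hs.mem_of_derivCnD (.of_thmCnD h)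

theorem mem_of_thmCnD_imp (hs : SaturatedCnD n Δ ψ) (h₁ : ThmCnD n (φ.imp χ)) (h₂ : φ ∈ Δ) :
    χ ∈ Δ :=
  hs.mem_of_imp_mem (hs.mem_of_thmCnD h₁) h₂

theorem and_mem_iff (hs : SaturatedCnD n Δ ψ) : α.and β ∈ Δ ↔ α ∈ Δ ∧ β ∈ Δ :=
  ⟨fun h => ⟨hs.mem_of_thmCnD_imp (A4 α β) h, hs.mem_of_thmCnD_imp (A5 α β) h⟩,
    fun ⟨hα, hβ⟩ => hs.mem_of_imp_mem (hs.mem_of_thmCnD_imp (A3 α β) hα) hβ⟩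

theorem or_mem_iff (hs : SaturatedCnD n Δ ψ) : α.or β ∈ Δ ↔ α ∈ Δ ∨ β ∈ Δ := by
  refine ⟨fun h => by_contra fun hαβ => hs.psi_notMem ?_, ?_⟩
  · obtain ⟨hα, hβ⟩ := not_or.1 hαβ
    exact hs.mem_of_imp_mem (hs.mem_of_imp_mem (hs.mem_of_thmCnD_imp (A8 α β ψ)
      (hs.imp_psi_mem hα)) (hs.imp_psi_mem hβ)) h
  · rintro (h | h)
    exacts [hs.mem_of_thmCnD_imp (A6 α β) h, hs.mem_of_thmCnD_imp (A7 α β) h]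

theorem imp_mem_iff (hs : SaturatedCnD n Δ ψ) : α.imp β ∈ Δ ↔ α ∉ Δ ∨ β ∈ Δ := by
  refine ⟨fun h => or_iff_not_imp_left.2 fun hα => hs.mem_of_imp_mem h (not_not.1 hα), ?_⟩
  rintro (hα | hβ)
  · exact (hs.or_mem_iff.1 (hs.mem_of_thmCnD (imp_or_self α β))).resolve_right hα
  · exact hs.mem_of_thmCnD_imp (A1 β α) hβ

theorem neg_mem_of_notMem (hs : SaturatedCnD n Δ ψ) (h : α ∉ Δ) : α.neg ∈ Δ :=
  (hs.or_mem_iff.1 (hs.mem_of_thmCnD (EM α))).resolve_left h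

theorem pow_one_mem_and_neg_notMem (hs : SaturatedCnD n Δ ψ) (h : α ∉ Δ ∨ α.neg ∉ Δ) :
    α.pow 1 ∈ Δ ∧ (α.pow 1).neg ∉ Δ := by
  have hcontra : α.and α.neg ∉ Δ := by rw [hs.and_mem_iff]; tauto
  exact ⟨hs.neg_mem_of_notMem hcontra, fun h' => hcontra (hs.mem_of_thmCnD_imp (cf _) h')⟩

theorem pow_mem_and_neg_notMem_of_lt (hs : SaturatedCnD n Δ ψ) {k m : ℕ}
    (h : α.pow k ∉ Δ ∨ (α.pow k).neg ∉ Δ) (hkm : k < m) :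
    α.pow m ∈ Δ ∧ (α.pow m).neg ∉ Δ := by
  induction m, hkm using Nat.le_induction with
  | base => exact hs.pow_one_mem_and_neg_notMem h
  | succ m _ ih => exact hs.pow_one_mem_and_neg_notMem (Or.inr ih.2)

theorem pow_mem_of_ne (hs : SaturatedCnD n Δ ψ) {i j : ℕ} (hi : α.pow i ∉ Δ) (hji : j ≠ i) :
    α.pow j ∈ Δ := by
  rcases hji.lt_or_gt with h | h
  · exact by_contra fun hj => hi (hs.pow_mem_and_neg_notMem_of_lt (Or.inl hj) h).1
  · exact (hs.pow_mem_and_neg_notMem_of_lt (Or.inl hi) h).1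

theorem bigPow_mem_iff (hs : SaturatedCnD n Δ ψ) {m : ℕ} (hm : 1 ≤ m) :
    α.bigPow m ∈ Δ ↔ ∀ k, 1 ≤ k → k ≤ m → α.pow k ∈ Δ := by
  induction m, hm using Nat.le_induction with
  | base =>
    refine ⟨fun h k hk1 hk => ?_, fun h => h 1 le_rfl le_rfl⟩
    obtain rfl : k = 1 := by omega
    exact h
  | succ m hm ih =>
    obtain ⟨m, rfl⟩ := Nat.exists_eq_add_of_le' hm
    change (α.bigPow (m + 1)).and (α.pow (m + 2)) ∈ Δ ↔ _
    rw [hs.and_mem_iff, ih]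
    refine ⟨fun ⟨h, hlast⟩ k hk1 hk => ?_, fun h => ⟨fun k hk1 hk => h k hk1 (by omega),
      h _ (by omega) le_rfl⟩⟩
    rcases Nat.lt_or_eq_of_le hk with hk | rfl
    exacts [h k hk1 (by omega), hlast]

theorem bigPow_notMem (hs : SaturatedCnD n Δ ψ) (hα : α ∈ Δ) (hnα : α.neg ∈ Δ) :
    α.bigPow n ∉ Δ := fun h =>
  hs.psi_notMem (hs.mem_of_imp_mem (hs.mem_of_imp_mem (hs.mem_of_thmCnD_imp (bcn α ψ) h) hα) hnα)

theorem bigPow_mem_iff_not_and (hs : SaturatedCnD n Δ ψ) (hn : 1 ≤ n) :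
    α.bigPow n ∈ Δ ↔ α ∉ Δ ∨ α.neg ∉ Δ :=
  ⟨fun h => not_and_or.1 fun ⟨hα, hnα⟩ => hs.bigPow_notMem hα hnα h,
    fun h => (hs.bigPow_mem_iff hn).2 fun _ hk _ =>
      (hs.pow_mem_and_neg_notMem_of_lt (k := 0) h hk).1⟩

theorem existsUnique_pow_notMem (hs : SaturatedCnD n Δ ψ) (hn : 1 ≤ n) (hα : α ∈ Δ)
    (hnα : α.neg ∈ Δ) : ∃! k, 1 ≤ k ∧ k ≤ n ∧ α.pow k ∉ Δ := by
  obtain ⟨k, hk1, hkn, hk⟩ : ∃ k, 1 ≤ k ∧ k ≤ n ∧ α.pow k ∉ Δ := by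
    by_contra! h
    exact hs.bigPow_notMem hα hnα ((hs.bigPow_mem_iff hn).2 h)
  exact ⟨k, ⟨hk1, hkn, hk⟩, fun j ⟨_, _, hj⟩ => by_contra fun hjk => hj (hs.pow_mem_of_ne hk hjk)⟩

theorem obl_mem_iff (hs : SaturatedCnD n Δ ψ) :
    α.obl ∈ Δ ↔ ∀ Θ ∈ WcanCnD n, RcanCnD Δ Θ → α ∈ Θ := by
  refine ⟨fun h Θ _ hR => hR α h, fun h => by_contra fun hα => ?_⟩
  have hnd : ¬ DerivCnD n (Form.obl ⁻¹' Δ) α := fun hd =>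
    hα (hs.mem_of_derivCnD hd.obl_of_preimage)
  obtain ⟨Θ, hΘ, hsat⟩ := DerivCnD.exists_saturatedCnD_superset hnd
  exact hsat.1 (.of_mem (h Θ ⟨α, hsat⟩ fun φ hφ => hΘ hφ))

end SaturatedCnD

/-- Truth Lemma for C_nᴰ: properties of ψ-saturated sets in C_nᴰ, n ≥ 2. -/
theorem truth_lemma_CnD (n : ℕ) (hn : 2 ≤ n) (Δ : Set Form) (hΔ : Δ ∈ WcanCnD n) :
    ∀ α β : Form,
      (α.and β ∈ Δ ↔ α ∈ Δ ∧ β ∈ Δ) ∧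
      (α.or β ∈ Δ ↔ α ∈ Δ ∨ β ∈ Δ) ∧
      (α.imp β ∈ Δ ↔ α ∉ Δ ∨ β ∈ Δ) ∧
      (α ∉ Δ → α.neg ∈ Δ) ∧
      (α.neg.neg ∈ Δ → α ∈ Δ) ∧
      ((α ∉ Δ ∨ α.neg ∉ Δ) → α.pow 1 ∈ Δ ∧ (α.pow 1).neg ∉ Δ) ∧
      (α ∈ Δ → α.neg ∈ Δ → ∀ i : ℕ, 1 ≤ i → i ≤ n → α.pow i ∉ Δ →
        ∀ j : ℕ, 1 ≤ j → j ≤ n → j ≠ i → α.pow j ∈ Δ) ∧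
      (α ∈ Δ → α.neg ∈ Δ → ∃! k : ℕ, 1 ≤ k ∧ k ≤ n ∧ α.pow k ∉ Δ) ∧
      (α.bigPow n ∈ Δ ↔ (α ∉ Δ ∨ α.neg ∉ Δ)) ∧
      (α.obl ∈ Δ ↔ ∀ Θ ∈ WcanCnD n, RcanCnD Δ Θ → α ∈ Θ) ∧
      (α.bigPow n ∈ Δ → α.obl.bigPow n ∈ Δ) := by
  obtain ⟨ψ, hs⟩ := hΔ
  have hn1 : 1 ≤ n := by omega
  intro α β
  exact ⟨hs.and_mem_iff, hs.or_mem_iff, hs.imp_mem_iff, hs.neg_mem_of_notMem,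
    hs.mem_of_thmCnD_imp (cf α), hs.pow_one_mem_and_neg_notMem,
    fun _ _ _ _ _ hi _ _ _ hji => hs.pow_mem_of_ne hi hji,
    hs.existsUnique_pow_notMem hn1, hs.bigPow_mem_iff_not_and hn1, hs.obl_mem_iff,
    hs.mem_of_thmCnD_imp (POn α)⟩
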